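/- arXiv:1606.08333 — 9 statements merged into one kernel-verified Lean document; each statement's English description precedes it below -/
import Mathlib

section
/- There are no non-trivial true lies on the class K of all Kripke models: for every formula φ of believed announcement logic, if the formula ¬φ → [φ]φ is valid on K, then φ itself is valid on K (equivalently, ¬φ is unsatisfiable on K). -/
inductive Form (A : Type) : Type
  | atom : ℕ → Form A
  | neg  : Form A → Form A
  | conj : Form A → Form A → Form A
  | box  : A → Form A → Form A
  | ann  : Form A → Form A → Form A
  deriving DecidableEq

namespace Form

/-- ◇_a φ := ¬□_a¬φ -/
def dia {A : Type} (a : A) (φ : Form A) : Form A := .neg (.box a (.neg φ))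

/-- φ → ψ := ¬(φ ∧ ¬ψ) -/
def imp {A : Type} (φ ψ : Form A) : Form A := .neg (.conj φ (.neg ψ))

/-- φ ∨ ψ := ¬(¬φ ∧ ¬ψ) -/
def or {A : Type} (φ ψ : Form A) : Form A := .neg (.conj (.neg φ) (.neg ψ))

/-- ⊥ := p ∧ ¬p -/
def bot {A : Type} : Form A := .conj (.atom 0) (.neg (.atom 0))

def top {A : Type} : Form A := .neg bot

def iff {A : Type} (φ ψ : Form A) : Form A := .conj (imp φ ψ) (imp ψ φ)

end Form

/-- A Kripke model over agents `A` with state set `S`. -/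
structure Model (A S : Type) where
  R : A → S → S → Prop
  V : ℕ → S → Prop

/-- Arrow elimination: keep only arrows pointing to states satisfying `P`. -/
def Model.restrict {A S : Type} (M : Model A S) (P : S → Prop) : Model A S :=
  ⟨fun a s t => M.R a s t ∧ P t, M.V⟩

/-- Satisfaction, with believed announcements interpreted by arrow elimination. -/
def Sat {A S : Type} : Model A S → Form A → S → Prop
  | M, .atom n, s => M.V n s
  | M, .neg φ, s => ¬ Sat M φ s
  | M, .conj φ ψ, s => Sat M φ s ∧ Sat M ψ s
  | M, .box a φ, s => ∀ t : S, M.R a s t → Sat M φ t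
  | M, .ann φ ψ, s => Sat (M.restrict (fun t => Sat M φ t)) ψ s

/-- K45: every accessibility relation is transitive and euclidean. -/
def isK45 {A S : Type} (M : Model A S) : Prop :=
  ∀ a : A, (∀ x y z : S, M.R a x y → M.R a y z → M.R a x z) ∧
    (∀ x y z : S, M.R a x y → M.R a x z → M.R a y z)

/-- KD45: every accessibility relation is transitive, euclidean and serial. -/
def isKD45 {A S : Type} (M : Model A S) : Prop :=
  ∀ a : A, (∀ x y z : S, M.R a x y → M.R a y z → M.R a x z) ∧
    (∀ x y z : S, M.R a x y → M.R a x z → M.R a y z) ∧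
    (∀ x : S, ∃ y : S, M.R a x y)

/-!
On a model without infinite forward paths, `φ` holds everywhere once `¬φ → [φ]φ` does: at a state
`s` refuting `φ`, all states strictly reachable from `s` satisfy `φ` by well-founded induction,
so the announcement of `φ` removes no arrow visible from `s`, and `[φ]φ` collapses to `φ` there.
An arbitrary model `M` is reached by unravelling it into layers `S × ℕ`, every arrow going down
one layer; formulas of depth `d` cannot see the bottom of the stack from layer `d`, so they have
the same truth value at `(x, d)` as at `x` in `M`.
-/

namespace Form

/-- An announcement `[φ]ψ` counts as `depth φ + depth ψ`: inside `ψ`, the test for `φ` is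
evaluated below the `ψ`-boxes. -/
def depth {A : Type} : Form A → ℕ
  | atom _ => 0
  | neg φ => depth φ
  | conj φ ψ => max (depth φ) (depth ψ)
  | box _ φ => depth φ + 1
  | ann φ ψ => depth φ + depth ψ

end Form

namespace Model

variable {A S : Type}

def Step (M : Model A S) (s t : S) : Prop := ∃ a, M.R a s t

def Reach (M : Model A S) : S → S → Prop := Relation.ReflTransGen M.Step

theorem Reach.of_restrict {M : Model A S} {P : S → Prop} {s t : S}
    (h : (M.restrict P).Reach s t) : M.Reach s t :=
  Relation.ReflTransGen.mono (fun _ _ ⟨a, hR, _⟩ => ⟨a, hR⟩) _ _ h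

end Model

section Locality

variable {A S : Type}

theorem sat_iff_of_agree_on_reach (ψ : Form A) : ∀ (M₁ M₂ : Model A S) (s : S),
    (∀ t, M₁.Reach s t → (∀ a, M₁.R a t = M₂.R a t) ∧ ∀ n, M₁.V n t ↔ M₂.V n t) →
    (Sat M₁ ψ s ↔ Sat M₂ ψ s) := by
  induction ψ with
  | atom n => exact fun M₁ M₂ s h => (h s .refl).2 n
  | neg φ ih => exact fun M₁ M₂ s h => not_congr (ih M₁ M₂ s h)
  | conj φ ψ ihφ ihψ => exact fun M₁ M₂ s h => and_congr (ihφ M₁ M₂ s h) (ihψ M₁ M₂ s h)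
  | box a φ ih =>
    intro M₁ M₂ s h
    simp only [Sat, ← (h s .refl).1 a]
    exact forall_congr' fun u => forall_congr' fun hu =>
      ih M₁ M₂ u fun t ht => h t (.head ⟨a, hu⟩ ht)
  | ann φ ψ ihφ ihψ =>
    intro M₁ M₂ s h
    refine ihψ _ _ s fun t ht => ?_
    replace ht := ht.of_restrict
    refine ⟨fun a => funext fun u => propext ?_, (h t ht).2⟩
    show M₁.R a t u ∧ _ ↔ M₂.R a t u ∧ _
    rw [← (h t ht).1 a]
    exact and_congr_right fun hu =>
      ihφ M₁ M₂ u fun t' ht' => h t' ((ht.tail ⟨a, hu⟩).trans ht')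

theorem sat_restrict_iff_of_reach {M : Model A S} {P : S → Prop} {s : S}
    (hP : ∀ t, M.Reach s t → ∀ u, M.Step t u → P u) (ψ : Form A) :
    Sat (M.restrict P) ψ s ↔ Sat M ψ s :=
  sat_iff_of_agree_on_reach ψ _ _ s fun t ht =>
    ⟨fun a => funext fun u => propext
      ⟨And.left, fun hR => ⟨hR, hP t ht.of_restrict u ⟨a, hR⟩⟩⟩, fun _ => Iff.rfl⟩

end Locality

theorem sat_of_wellFounded_of_true_lie {A S : Type} {N : Model A S}
    (hwf : WellFounded (flip N.Step)) (φ : Form A)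
    (h : ∀ s, Sat N (Form.imp (Form.neg φ) (Form.ann φ φ)) s) (s : S) : Sat N φ s := by
  induction s using hwf.transGen.induction with
  | _ s ih =>
    by_contra hs
    have hann : Sat (N.restrict (Sat N φ)) φ s := by
      have := h s
      simp only [Sat, Form.imp, not_and, not_not] at this
      exact this hs
    refine hs ((sat_restrict_iff_of_reach (fun t ht u htu => ih u ?_) φ).mp hann)
    exact Relation.transGen_swap.mpr (.tail' ht htu)

structure IsLayeredCopy {A S : Type} (M : Model A S) (N : Model A (S × ℕ)) (m : ℕ) : Prop where
  layer_succ : ∀ a u v, N.R a u v → v.2 + 1 = u.2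
  rel_iff : ∀ a x y k, m ≤ k → (N.R a (x, k + 1) (y, k) ↔ M.R a x y)
  val_iff : ∀ n x k, N.V n (x, k) ↔ M.V n x

namespace IsLayeredCopy

variable {A S : Type} {M : Model A S} {N : Model A (S × ℕ)} {m : ℕ}

theorem restrict (hN : IsLayeredCopy M N m) {P : S → Prop} {Q : S × ℕ → Prop} {m' : ℕ}
    (hm : m ≤ m') (hQ : ∀ z k, m' ≤ k → (Q (z, k) ↔ P z)) :
    IsLayeredCopy (M.restrict P) (N.restrict Q) m' where
  layer_succ a u v hR := hN.layer_succ a u v hR.1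
  rel_iff a x y k hk := and_congr (hN.rel_iff a x y k (hm.trans hk)) (hQ y k hk)
  val_iff := hN.val_iff

theorem sat_iff (ψ : Form A) : ∀ {M : Model A S} {N : Model A (S × ℕ)} {m : ℕ},
    IsLayeredCopy M N m → ∀ x n, m + ψ.depth ≤ n → (Sat N ψ (x, n) ↔ Sat M ψ x) := by
  induction ψ with
  | atom p => exact fun hN x n _ => hN.val_iff p x n
  | neg φ ih => exact fun hN x n hn => not_congr (ih hN x n hn)
  | conj φ ψ ihφ ihψ =>
    intro M N m hN x n hn
    simp only [Form.depth] at hn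
    exact and_congr (ihφ hN x n (by omega)) (ihψ hN x n (by omega))
  | box a φ ih =>
    intro M N m hN x n hn
    simp only [Form.depth] at hn
    obtain ⟨k, rfl⟩ : ∃ k, n = k + 1 := ⟨n - 1, by omega⟩
    constructor
    · intro H y hy
      exact (ih hN y k (by omega)).mp (H (y, k) ((hN.rel_iff a x y k (by omega)).mpr hy))
    · rintro H ⟨y, j⟩ hR
      obtain rfl : j = k := by have := hN.layer_succ a _ _ hR; simp only at this; omega
      exact (ih hN y j (by omega)).mpr (H y ((hN.rel_iff a x y j (by omega)).mp hR))
  | ann φ ψ ihφ ihψ =>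
    intro M N m hN x n hn
    simp only [Form.depth] at hn
    exact ihψ (hN.restrict (m' := m + φ.depth) (by omega)
      fun z k hk => ihφ hN z k hk) x n (by omega)

end IsLayeredCopy

namespace Model

variable {A S : Type}

def layers (M : Model A S) : Model A (S × ℕ) :=
  ⟨fun a u v => v.2 + 1 = u.2 ∧ M.R a u.1 v.1, fun n u => M.V n u.1⟩

theorem isLayeredCopy_layers (M : Model A S) : IsLayeredCopy M M.layers 0 where
  layer_succ _ _ _ hR := hR.1
  rel_iff _ _ _ _ _ := and_iff_right rfl
  val_iff _ _ _ := Iff.rfl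

theorem wellFounded_flip_step_layers (M : Model A S) : WellFounded (flip M.layers.Step) :=
  Subrelation.wf (r := InvImage (· < ·) Prod.snd)
    (fun ⟨_, hR, _⟩ => by simp only [InvImage]; omega) (InvImage.wf _ wellFounded_lt)

end Model

/-- No non-trivial true lies on the class K: if ¬φ → [φ]φ is valid on all Kripke
models, then φ is valid on all Kripke models. -/
theorem no_nontrivial_true_lies_on_K (A : Type) (φ : Form A)
    (h : ∀ (S : Type) (M : Model A S) (s : S),
      Sat M (Form.imp (Form.neg φ) (Form.ann φ φ)) s) :
    ∀ (S : Type) (M : Model A S) (s : S), Sat M φ s := by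
  intro S M s
  have hφ : Sat M.layers φ (s, φ.depth) :=
    sat_of_wellFounded_of_true_lie M.wellFounded_flip_step_layers φ (h _ _) _
  exact (M.isLayeredCopy_layers.sat_iff φ s φ.depth (by omega)).mp hφ
end

section
/- There are no non-trivial 001-valid formulas on the class K of all Kripke models: for every formula φ of believed announcement logic, if the formula ¬φ → [φ](¬φ ∧ [φ]φ) is valid on K, then φ itself is valid on K (equivalently, ¬φ is unsatisfiable on K). -/
/-!
Suppose `φ` fails at `(M, s)` and let `N = M|φ`. Validity at `(M, s)` gives `N, s ⊨ ¬φ` and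
`N, s ⊨ [φ]φ`. Validity at `(N, s)` then gives `N, s ⊨ [φ]¬φ`, contradicting `N, s ⊨ [φ]φ`.
-/

-- The paper's "001": `φ` false, false after announcing `φ`, true after announcing it twice.
def Form.falseFalseTrue {A : Type} (φ : Form A) : Form A :=
  .imp (.neg φ) (.ann φ (.conj (.neg φ) (.ann φ φ)))

namespace Sat

variable {A S : Type} {M : Model A S} {φ ψ : Form A} {s : S}

theorem imp_iff : Sat M (φ.imp ψ) s ↔ (Sat M φ s → Sat M ψ s) := by
  simp only [Form.imp, Sat]
  tauto

theorem falseFalseTrue_iff :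
    Sat M φ.falseFalseTrue s ↔
      (¬ Sat M φ s →
        ¬ Sat (M.restrict (Sat M φ)) φ s ∧
          Sat (M.restrict (Sat M φ)) (.ann φ φ) s) := by
  simp only [Form.falseFalseTrue, imp_iff, Sat]

theorem of_falseFalseTrue_of_falseFalseTrue_restrict
    (hM : Sat M φ.falseFalseTrue s) (hN : Sat (M.restrict (Sat M φ)) φ.falseFalseTrue s) :
    Sat M φ s := by
  by_contra hφ
  obtain ⟨hNφ, hNannφ⟩ := falseFalseTrue_iff.mp hM hφ
  exact (falseFalseTrue_iff.mp hN hNφ).1 hNannφ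

end Sat

/-- No non-trivial 001-valid formulas on the class K: if ¬φ → [φ](¬φ ∧ [φ]φ) is
valid on all Kripke models, then φ is valid on all Kripke models. -/
theorem no_nontrivial_001_valid_on_K (A : Type) (φ : Form A)
    (h : ∀ (S : Type) (M : Model A S) (s : S),
      Sat M (Form.imp (Form.neg φ)
        (Form.ann φ (Form.conj (Form.neg φ) (Form.ann φ φ)))) s) :
    ∀ (S : Type) (M : Model A S) (s : S), Sat M φ s :=
  fun S M s => Sat.of_falseFalseTrue_of_falseFalseTrue_restrict (h S M s) (h S _ s)
end

section
/- Some true lies are not successful formulas. Let φ := □⊥ ∨ (p ∧ ◇p ∧ ◇¬p) ∨ (¬p ∧ ◇p ∧ □p) in the single-agent language. Then: (i) ¬φ → [φ]φ is valid on the class K45 (hence also on KD45), so φ is 01-valid (a true lie); (ii) φ → [φ]φ is not valid on KD45 (hence not on K45): there is a pointed KD45 model satisfying φ ∧ [φ]¬φ, so φ is not 11-valid (not a successful formula); and (iii) (¬φ ∧ ◇φ) ∧ [φ]φ is satisfiable on KD45, so φ is moreover a non-trivially believable true lie. -/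
/-- φ := □⊥ ∨ (p ∧ ◇p ∧ ◇¬p) ∨ (¬p ∧ ◇p ∧ □p), single agent. -/
def phi2 : Form Unit :=
  Form.or (Form.box () Form.bot)
    (Form.or
      (Form.conj (Form.atom 0)
        (Form.conj (Form.dia () (Form.atom 0)) (Form.dia () (Form.neg (Form.atom 0)))))
      (Form.conj (Form.neg (Form.atom 0))
        (Form.conj (Form.dia () (Form.atom 0)) (Form.box () (Form.atom 0)))))

/-! In a K45 model every successor `t` of `s` has the same successors as `s`, so on such `t`
the formula `phi2` reduces to "`p` holds at `t` and `s` sees both a `p`- and a `¬p`-state". If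
`phi2` fails at `s`, announcing it therefore either deletes every arrow out of `s` (so `□⊥`
holds) or, when `s` sees both kinds of states, keeps exactly the arrows to `p`-states while `s`
itself is a `¬p`-state (so the third disjunct holds). Two small KD45 models witness the rest. -/

section Semantics

variable {A S : Type} (M : Model A S)

theorem sat_imp (φ ψ : Form A) (s : S) :
    Sat M (Form.imp φ ψ) s ↔ (Sat M φ s → Sat M ψ s) := by
  simp only [Form.imp, Sat, not_and, not_not]

theorem sat_or (φ ψ : Form A) (s : S) :
    Sat M (Form.or φ ψ) s ↔ Sat M φ s ∨ Sat M ψ s := by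
  simp only [Form.or, Sat, not_and, not_not]
  tauto

theorem sat_dia (a : A) (φ : Form A) (s : S) :
    Sat M (Form.dia a φ) s ↔ ∃ t, M.R a s t ∧ Sat M φ t := by
  simp only [Form.dia, Sat, not_forall, not_not, exists_prop]

theorem sat_box_bot (a : A) (s : S) :
    Sat M (Form.box a Form.bot) s ↔ ∀ t, ¬ M.R a s t := by
  simp only [Form.bot, Sat, and_not_self, imp_false]

theorem not_sat_imp_ann_of_sat_conj_ann_neg {φ : Form A} {s : S}
    (h : Sat M (Form.conj φ (Form.ann φ (Form.neg φ))) s) :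
    ¬ Sat M (Form.imp φ (Form.ann φ φ)) s := by
  rw [sat_imp]
  exact fun himp => h.2 (himp h.1)

end Semantics

theorem isKD45.isK45 {A S : Type} {M : Model A S} (h : isKD45 M) : isK45 M :=
  fun a => ⟨(h a).1, (h a).2.1⟩

theorem isK45.rel_iff_of_rel {A S : Type} {M : Model A S} (h : isK45 M) {a : A} {s t : S}
    (hst : M.R a s t) (u : S) : M.R a t u ↔ M.R a s u :=
  ⟨fun htu => (h a).1 s t u hst htu, fun hsu => (h a).2 s t u hst hsu⟩

section Phi2

variable {S : Type} (M : Model Unit S)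

theorem sat_phi2 (s : S) :
    Sat M phi2 s ↔
      (∀ t, ¬ M.R () s t) ∨
      (M.V 0 s ∧ (∃ t, M.R () s t ∧ M.V 0 t) ∧ (∃ t, M.R () s t ∧ ¬ M.V 0 t)) ∨
      (¬ M.V 0 s ∧ (∃ t, M.R () s t ∧ M.V 0 t) ∧ ∀ t, M.R () s t → M.V 0 t) := by
  rw [phi2, sat_or, sat_or, sat_box_bot]
  simp only [Sat, sat_dia]

variable {M}

theorem isK45.sat_phi2_iff_of_rel (h : isK45 M) {s t : S} (hst : M.R () s t) :
    Sat M phi2 t ↔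
      M.V 0 t ∧ (∃ u, M.R () s u ∧ M.V 0 u) ∧ (∃ u, M.R () s u ∧ ¬ M.V 0 u) := by
  rw [sat_phi2]
  simp only [h.rel_iff_of_rel hst]
  constructor
  · rintro (hblind | hmixed | ⟨hnp, -, hall⟩)
    · exact absurd hst (hblind t)
    · exact hmixed
    · exact absurd (hall t hst) hnp
  · exact fun hmixed => Or.inr (Or.inl hmixed)

theorem isK45.sat_ann_phi2_phi2_of_not_sat_phi2 (h : isK45 M) {s : S}
    (hs : ¬ Sat M phi2 s) : Sat M (Form.ann phi2 phi2) s := by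
  rw [sat_phi2] at hs
  simp only [Sat]
  rw [sat_phi2]
  simp only [Model.restrict, and_congr_right (h.sat_phi2_iff_of_rel (s := s))]
  by_cases hmixed : (∃ u, M.R () s u ∧ M.V 0 u) ∧ (∃ u, M.R () s u ∧ ¬ M.V 0 u)
  · have hnp : ¬ M.V 0 s := fun hp => hs (Or.inr (Or.inl ⟨hp, hmixed⟩))
    obtain ⟨u, hsu, hu⟩ := hmixed.1
    exact Or.inr (Or.inr ⟨hnp, ⟨u, ⟨hsu, hu, hmixed⟩, hu⟩, fun t ht => ht.2.1⟩)
  · exact Or.inl fun t ht => hmixed ht.2.2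

end Phi2

/-- Announcing `phi2` removes the arrows to the `¬p`-state `1`, which kills the second disjunct
at `0`. -/
def unsuccessfulModel : Model Unit (Fin 2) := ⟨fun _ _ _ => True, fun n s => n = 0 ∧ s = 0⟩

theorem isKD45_unsuccessfulModel : isKD45 unsuccessfulModel :=
  fun _ => ⟨fun _ _ _ _ _ => trivial, fun _ _ _ _ _ => trivial, fun x => ⟨x, trivial⟩⟩

theorem sat_unsuccessfulModel :
    Sat unsuccessfulModel (Form.conj phi2 (Form.ann phi2 (Form.neg phi2))) 0 := by
  simp [Sat, sat_phi2, unsuccessfulModel, Model.restrict, Fin.exists_fin_two,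
    Fin.forall_fin_two]

/-- Only `1` satisfies `phi2`, so after the announcement `0` sees only `p`-states. -/
def believableModel : Model Unit (Fin 3) := ⟨fun _ _ t => t ≠ 0, fun n s => n = 0 ∧ s = 1⟩

theorem isKD45_believableModel : isKD45 believableModel :=
  fun _ => ⟨fun _ _ _ _ h => h, fun _ _ _ _ h => h, fun _ => ⟨1, Fin.zero_lt_one.ne'⟩⟩

theorem sat_believableModel :
    Sat believableModel
      (Form.conj (Form.conj (Form.neg phi2) (Form.dia () phi2)) (Form.ann phi2 phi2)) 0 := by
  simp [Sat, sat_dia, sat_phi2, believableModel, Model.restrict, Fin.exists_fin_succ,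
    Fin.forall_fin_succ]

/-- Some true lies are not successful formulas:
(i) ¬φ → [φ]φ is valid on K45 (hence on KD45);
(ii) some pointed KD45 model satisfies φ ∧ [φ]¬φ (so φ → [φ]φ is not valid on
KD45, hence not on K45);
(iii) (¬φ ∧ ◇φ) ∧ [φ]φ is satisfiable on KD45 (φ is a non-trivially believable
true lie). -/
theorem true_lie_not_successful :
    (∀ (S : Type) (M : Model Unit S) (s : S), isK45 M →
      Sat M (Form.imp (Form.neg phi2) (Form.ann phi2 phi2)) s) ∧
    (∀ (S : Type) (M : Model Unit S) (s : S), isKD45 M →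
      Sat M (Form.imp (Form.neg phi2) (Form.ann phi2 phi2)) s) ∧
    (∃ (S : Type) (M : Model Unit S) (s : S), isKD45 M ∧
      Sat M (Form.conj phi2 (Form.ann phi2 (Form.neg phi2))) s) ∧
    ¬ (∀ (S : Type) (M : Model Unit S) (s : S), isKD45 M →
      Sat M (Form.imp phi2 (Form.ann phi2 phi2)) s) ∧
    ¬ (∀ (S : Type) (M : Model Unit S) (s : S), isK45 M →
      Sat M (Form.imp phi2 (Form.ann phi2 phi2)) s) ∧
    (∃ (S : Type) (M : Model Unit S) (s : S), isKD45 M ∧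
      Sat M (Form.conj (Form.conj (Form.neg phi2) (Form.dia () phi2))
        (Form.ann phi2 phi2)) s) := by
  have valid_K45 : ∀ (S : Type) (M : Model Unit S) (s : S), isK45 M →
      Sat M (Form.imp (Form.neg phi2) (Form.ann phi2 phi2)) s :=
    fun _ M _ h => (sat_imp M _ _ _).2 h.sat_ann_phi2_phi2_of_not_sat_phi2
  have not_successful := not_sat_imp_ann_of_sat_conj_ann_neg _ sat_unsuccessfulModel
  exact ⟨valid_K45, fun S M s h => valid_K45 S M s h.isK45,
    ⟨_, _, _, isKD45_unsuccessfulModel, sat_unsuccessfulModel⟩,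
    fun hvalid => not_successful (hvalid _ _ _ isKD45_unsuccessfulModel),
    fun hvalid => not_successful (hvalid _ _ _ isKD45_unsuccessfulModel.isK45),
    ⟨_, _, _, isKD45_believableModel, sat_believableModel⟩⟩
end

section
/- Let χ := ¬□⊥ ∧ ((◇□⊥ ∧ ◇¬□⊥) → ◇(p ∧ □⊥)) in the single-agent language. For every function σ : ℕ⁺ → {0,1} there exists a pointed Kripke model (M,s) such that for every n ≥ 0, M|χ^n, s ⊨ σ_{n+1}(χ). In particular χ is σ-satisfiable on the class K of all Kripke models for every infinite binary string σ; taking an unstable σ (one in which both digits occur infinitely often), χ is an unstable formula: its truth value at the designated state never stabilizes under iterated announcement of χ. -/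
/-- Iterated announcement: M|φ^0 = M and M|φ^{n+1} = (M|φ^n)|φ. -/
def updIter {A S : Type} (M : Model A S) (φ : Form A) : ℕ → Model A S
  | 0 => M
  | n + 1 => (updIter M φ n).restrict (fun t => Sat (updIter M φ n) φ t)

/-- χ := ¬□⊥ ∧ ((◇□⊥ ∧ ◇¬□⊥) → ◇(p ∧ □⊥)), single agent. -/
def chi3 : Form Unit :=
  Form.conj (Form.neg (Form.box () Form.bot))
    (Form.imp
      (Form.conj (Form.dia () (Form.box () Form.bot))
        (Form.dia () (Form.neg (Form.box () Form.bot))))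
      (Form.dia () (Form.conj (Form.atom 0) (Form.box () Form.bot))))

/-!
Since `p` is false at every state of the model below, `χ` holds at a state iff the state has a
successor but not both a dead-end successor and a successor that is not a dead end. The root
always sees a reflexive loop, and for every `m` with `σ m = false` it also sees the start of a
path of length `m`. A dead end fails `χ` while an inner state of a path (one successor) satisfies
it, so each announcement of `χ` shortens every path by one edge. After `n` announcements the
root therefore has a dead-end successor, and fails `χ`, exactly when `σ n = false`.
-/

section Semantics

variable {A S : Type} (M : Model A S)

lemma not_sat_bot (t : S) : ¬ Sat M Form.bot t := by
  simp [Form.bot, Sat]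

lemma sat_dia_iff (a : A) (φ : Form A) (t : S) :
    Sat M (.dia a φ) t ↔ ∃ u, M.R a t u ∧ Sat M φ u := by
  simp only [Form.dia, Sat, not_forall, not_not, exists_prop]

lemma sat_imp_iff (φ ψ : Form A) (t : S) :
    Sat M (.imp φ ψ) t ↔ (Sat M φ t → Sat M ψ t) := by
  simp only [Form.imp, Sat, not_and, not_not]

end Semantics

lemma sat_chi3_iff {S : Type} (M : Model Unit S) (t : S) :
    Sat M chi3 t ↔ (∃ u, M.R () t u) ∧
      ((∃ u, M.R () t u ∧ ∀ v, ¬ M.R () u v) → (∃ u, M.R () t u ∧ ∃ v, M.R () u v) →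
        ∃ u, M.R () t u ∧ M.V 0 u ∧ ∀ v, ¬ M.R () u v) := by
  simp only [chi3, sat_imp_iff, sat_dia_iff, Sat, not_sat_bot, imp_false, and_imp, not_forall,
    not_not]

inductive ChainState : Type
  | root
  | loop
  | chain (m j : ℕ)

open ChainState

/-- The accessibility relation after `k` announcements of `χ`: the path for `m` has been
shortened to `chain m 0 → ⋯ → chain m (m - k)`, and is detached from the root once `k > m`. -/
inductive ChainStep (σ : ℕ → Bool) (k : ℕ) : ChainState → ChainState → Prop
  | loop : ChainStep σ k loop loop
  | root_loop : ChainStep σ k root loop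
  | root_chain {m : ℕ} : σ m = false → k ≤ m → ChainStep σ k root (chain m 0)
  | chain_succ {m j : ℕ} : k + j < m → ChainStep σ k (chain m j) (chain m (j + 1))

def chainModel (σ : ℕ → Bool) (k : ℕ) : Model Unit ChainState :=
  ⟨fun _ => ChainStep σ k, fun _ _ => False⟩

section ChainModel

variable (σ : ℕ → Bool) (k : ℕ)

lemma sat_chi3_chainModel_iff (t : ChainState) :
    Sat (chainModel σ k) chi3 t ↔ (∃ u, ChainStep σ k t u) ∧
      ¬ ((∃ u, ChainStep σ k t u ∧ ∀ v, ¬ ChainStep σ k u v) ∧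
        ∃ u, ChainStep σ k t u ∧ ∃ v, ChainStep σ k u v) := by
  simp only [sat_chi3_iff, chainModel, false_and, and_false, exists_false, not_and]

lemma sat_chi3_loop : Sat (chainModel σ k) chi3 loop := by
  rw [sat_chi3_chainModel_iff]
  refine ⟨⟨loop, .loop⟩, fun ⟨⟨u, hu, hdead⟩, _⟩ => ?_⟩
  cases hu
  exact hdead loop .loop

lemma not_chainStep_of_le {m j : ℕ} (h : m ≤ k + j) (u : ChainState) :
    ¬ ChainStep σ k (chain m j) u := by
  rintro ⟨⟩
  omega

lemma sat_chi3_chain_iff (m j : ℕ) : Sat (chainModel σ k) chi3 (chain m j) ↔ k + j < m := by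
  rw [sat_chi3_chainModel_iff]
  constructor
  · rintro ⟨⟨u, hu⟩, -⟩
    cases hu
    assumption
  · intro hlt
    -- a path state has a single successor, so it cannot see both a dead end and a non-dead end
    refine ⟨⟨_, .chain_succ hlt⟩, fun ⟨⟨u, hu, hdead⟩, ⟨u', hu', v, hv⟩⟩ => ?_⟩
    cases hu
    cases hu'
    exact hdead v hv

lemma sat_chi3_root_iff : Sat (chainModel σ k) chi3 root ↔ σ k = true := by
  rw [sat_chi3_chainModel_iff]
  have hloop : ∃ v, ChainStep σ k loop v := ⟨loop, .loop⟩
  constructor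
  · rintro ⟨-, hnot⟩
    by_contra hσ
    rw [Bool.not_eq_true] at hσ
    exact hnot ⟨⟨chain k 0, .root_chain hσ le_rfl, not_chainStep_of_le σ k (by omega)⟩,
      ⟨loop, .root_loop, hloop⟩⟩
  · intro hσ
    refine ⟨⟨loop, .root_loop⟩, fun ⟨⟨u, hu, hdead⟩, _⟩ => ?_⟩
    cases hu with
    | root_loop => exact hdead loop .loop
    | @root_chain m hm hkm =>
      obtain rfl | hlt := eq_or_lt_of_le hkm
      · exact Bool.false_ne_true (hm ▸ hσ)
      · exact hdead _ (.chain_succ (by omega))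

lemma chainStep_and_sat_chi3_iff (u t : ChainState) :
    ChainStep σ k u t ∧ Sat (chainModel σ k) chi3 t ↔ ChainStep σ (k + 1) u t := by
  constructor
  · rintro ⟨hstep, hsat⟩
    cases hstep with
    | loop => exact .loop
    | root_loop => exact .root_loop
    | root_chain hm _ =>
      exact .root_chain hm (by have := (sat_chi3_chain_iff σ k _ _).mp hsat; omega)
    | chain_succ _ =>
      exact .chain_succ (by have := (sat_chi3_chain_iff σ k _ _).mp hsat; omega)
  · intro hstep
    cases hstep with
    | loop => exact ⟨.loop, sat_chi3_loop σ k⟩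
    | root_loop => exact ⟨.root_loop, sat_chi3_loop σ k⟩
    | root_chain hm hkm =>
      exact ⟨.root_chain hm (by omega), (sat_chi3_chain_iff σ k _ _).mpr (by omega)⟩
    | chain_succ hlt =>
      exact ⟨.chain_succ (by omega), (sat_chi3_chain_iff σ k _ _).mpr (by omega)⟩

lemma restrict_chainModel :
    (chainModel σ k).restrict (fun t => Sat (chainModel σ k) chi3 t) = chainModel σ (k + 1) := by
  simp only [Model.restrict, chainModel]
  congr
  funext _ u t
  exact propext (chainStep_and_sat_chi3_iff σ k u t)

lemma updIter_chainModel (n : ℕ) : updIter (chainModel σ 0) chi3 n = chainModel σ n := by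
  induction n with
  | zero => rfl
  | succ n ih => rw [updIter, ih, restrict_chainModel]

end ChainModel

/-- `σ n` encodes `σ_{n+1}`, with `true` standing for `1`. -/
theorem chi_sigma_satisfiable_on_K (σ : ℕ → Bool) :
    ∃ (S : Type) (M : Model Unit S) (s : S),
      ∀ n : ℕ, Sat (updIter M chi3 n) (if σ n then chi3 else Form.neg chi3) s := by
  refine ⟨ChainState, chainModel σ 0, root, fun n => ?_⟩
  rw [updIter_chainModel]
  cases h : σ n
  · simp only [Bool.false_eq_true, if_false, Sat, sat_chi3_root_iff, h, not_false_eq_true]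
  · simpa only [if_true] using (sat_chi3_root_iff σ n).mpr h
end

section
/- The single-agent formula □p is a true lie on K45: the formula ¬□p → [□p]□p is valid on the class K45 of Kripke models with a transitive and euclidean accessibility relation. -/
/- Euclideanness makes every successor of a state reflexive, so a successor `t` that survives the
announcement of `□p` (that is, `M, t ⊨ □p`) sees itself and therefore satisfies `p`. -/

theorem Sat.imp_of_right {A S : Type} {M : Model A S} {φ ψ : Form A} {s : S}
    (h : Sat M ψ s) : Sat M (Form.imp φ ψ) s :=
  fun hφψ => hφψ.2 h

theorem Sat.ann_box_atom_box_atom {A S : Type} {M : Model A S} {a : A} {n : ℕ} {s : S}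
    (hrefl : ∀ t, M.R a s t → M.R a t t) :
    Sat M (Form.ann (Form.box a (Form.atom n)) (Form.box a (Form.atom n))) s := by
  rintro t ⟨hst, ht⟩
  exact ht t (hrefl t hst)

theorem refl_of_euclidean {S : Type} {R : S → S → Prop}
    (heucl : ∀ x y z, R x y → R x z → R y z) {s t : S} (hst : R s t) : R t t :=
  heucl s t t hst hst

/-- The single-agent formula □p is a true lie on K45: ¬□p → [□p]□p is valid on K45. -/
theorem box_p_is_true_lie_on_K45 :
    ∀ (S : Type) (M : Model Unit S) (s : S), isK45 M →
      Sat M (Form.imp (Form.neg (Form.box () (Form.atom 0)))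
        (Form.ann (Form.box () (Form.atom 0)) (Form.box () (Form.atom 0)))) s := by
  intro S M s hK
  exact Sat.imp_of_right <| Sat.ann_box_atom_box_atom fun _ => refl_of_euclidean (hK ()).2
end

section
/- The single-agent formula p ∧ □p is 01-satisfiable but not 01-valid on KD45: there is a pointed KD45 model satisfying ¬(p ∧ □p) ∧ [p ∧ □p](p ∧ □p) (so p ∧ □p is sometimes a true lie), and there is a pointed KD45 model satisfying ¬(p ∧ □p) ∧ [p ∧ □p]¬(p ∧ □p) (so ¬(p ∧ □p) → [p ∧ □p](p ∧ □p) is not valid on KD45). -/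
/-- The single-agent formula p ∧ □p. -/
def pAndBoxP : Form Unit := Form.conj (Form.atom 0) (Form.box () (Form.atom 0))

/-!
Announcing `p ∧ □p` by arrow elimination deletes every arrow into a `¬p`-state, so afterwards
`□p` holds everywhere and `[p ∧ □p](p ∧ □p)` is equivalent to `p`. The true lie therefore needs a
state where `p` holds but `□p` fails, and the failing instance of the implication a `¬p`-state.
One KD45 model provides both: every state sees only the `¬p`-state `false`, and `p` holds at `true`.
-/

section Announcement

variable {S : Type} (M : Model Unit S) (s : S)

theorem sat_pAndBoxP_iff : Sat M pAndBoxP s ↔ M.V 0 s ∧ ∀ t, M.R () s t → M.V 0 t := Iff.rfl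

theorem sat_ann_pAndBoxP_pAndBoxP_iff : Sat M (.ann pAndBoxP pAndBoxP) s ↔ M.V 0 s :=
  ⟨And.left, fun hp => ⟨hp, fun _ ht => ht.2.1⟩⟩

theorem sat_ann_pAndBoxP_neg_pAndBoxP_iff :
    Sat M (.ann pAndBoxP (.neg pAndBoxP)) s ↔ ¬ M.V 0 s :=
  not_congr (sat_ann_pAndBoxP_pAndBoxP_iff M s)

theorem sat_neg_pAndBoxP_and_ann_pAndBoxP_iff :
    Sat M (.conj (.neg pAndBoxP) (.ann pAndBoxP pAndBoxP)) s ↔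
      M.V 0 s ∧ ∃ t, M.R () s t ∧ ¬ M.V 0 t := by
  change ¬ Sat M pAndBoxP s ∧ Sat M (.ann pAndBoxP pAndBoxP) s ↔ _
  rw [sat_pAndBoxP_iff, sat_ann_pAndBoxP_pAndBoxP_iff]
  grind

theorem sat_neg_pAndBoxP_and_ann_neg_pAndBoxP_iff :
    Sat M (.conj (.neg pAndBoxP) (.ann pAndBoxP (.neg pAndBoxP))) s ↔ ¬ M.V 0 s := by
  change ¬ Sat M pAndBoxP s ∧ Sat M (.ann pAndBoxP (.neg pAndBoxP)) s ↔ _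
  rw [sat_pAndBoxP_iff, sat_ann_pAndBoxP_neg_pAndBoxP_iff]
  tauto

end Announcement

theorem isKD45_of_R_eq {A S : Type} (M : Model A S) (Q : A → S → Prop)
    (hR : ∀ a s, M.R a s = Q a) (hQ : ∀ a, ∃ t, Q a t) : isKD45 M := by
  intro a
  simp only [hR]
  exact ⟨fun _ _ _ _ h => h, fun _ _ _ _ h => h, fun _ => hQ a⟩

def lieModel : Model Unit Bool := ⟨fun _ _ t => t = false, fun _ s => s = true⟩

theorem isKD45_lieModel : isKD45 lieModel :=
  isKD45_of_R_eq lieModel (fun _ t => t = false) (fun _ _ => rfl) (fun _ => ⟨false, rfl⟩)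

/-- p ∧ □p is 01-satisfiable but not 01-valid on KD45: some pointed KD45 model
satisfies ¬(p ∧ □p) ∧ [p ∧ □p](p ∧ □p), and some pointed KD45 model satisfies
¬(p ∧ □p) ∧ [p ∧ □p]¬(p ∧ □p) (hence ¬(p ∧ □p) → [p ∧ □p](p ∧ □p) is not valid
on KD45). -/
theorem p_and_box_p_01_satisfiable_not_01_valid :
    (∃ (S : Type) (M : Model Unit S) (s : S), isKD45 M ∧
      Sat M (Form.conj (Form.neg pAndBoxP) (Form.ann pAndBoxP pAndBoxP)) s) ∧
    (∃ (S : Type) (M : Model Unit S) (s : S), isKD45 M ∧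
      Sat M (Form.conj (Form.neg pAndBoxP) (Form.ann pAndBoxP (Form.neg pAndBoxP))) s) ∧
    ¬ (∀ (S : Type) (M : Model Unit S) (s : S), isKD45 M →
      Sat M (Form.imp (Form.neg pAndBoxP) (Form.ann pAndBoxP pAndBoxP)) s) := by
  have hfalse : Sat lieModel (.conj (.neg pAndBoxP) (.ann pAndBoxP (.neg pAndBoxP))) false :=
    (sat_neg_pAndBoxP_and_ann_neg_pAndBoxP_iff lieModel false).2 Bool.false_ne_true
  have htrue : Sat lieModel (.conj (.neg pAndBoxP) (.ann pAndBoxP pAndBoxP)) true :=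
    (sat_neg_pAndBoxP_and_ann_pAndBoxP_iff lieModel true).2 ⟨rfl, false, rfl, Bool.false_ne_true⟩
  refine ⟨⟨Bool, lieModel, true, isKD45_lieModel, htrue⟩,
    ⟨Bool, lieModel, false, isKD45_lieModel, hfalse⟩, fun hvalid => ?_⟩
  -- `[φ]¬ψ` unfolds to `¬[φ]ψ`, so `hfalse` refutes the implication at `false`.
  exact hvalid Bool lieModel false isKD45_lieModel hfalse
end

section
/- The single-agent Moore sentence p ∧ ¬□p is a non-trivial self-refuting (10-valid) formula: (p ∧ ¬□p) → [p ∧ ¬□p]¬(p ∧ ¬□p) is valid on the class K of all Kripke models, and (p ∧ ¬□p) ∧ [p ∧ ¬□p]¬(p ∧ ¬□p) is satisfiable on the class KD45. -/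
/-- The single-agent Moore sentence p ∧ ¬□p. -/
def moore : Form Unit := Form.conj (Form.atom 0) (Form.neg (Form.box () (Form.atom 0)))

/-!
Announcing `φ` keeps only the arrows into `φ`-states, and `p` is unaffected. So after announcing
`p ∧ ¬□p` every remaining arrow ends in a `p`-state, `□p` holds everywhere, and the Moore sentence
is false everywhere: the announcement refutes itself in every model. It is nonetheless true
somewhere in KD45: let every state see only a `¬p`-state, and evaluate at a `p`-state.
-/

namespace Form

def mooreSentence {A : Type} (a : A) (n : ℕ) : Form A := conj (atom n) (neg (box a (atom n)))

end Form

theorem moore_eq_mooreSentence : moore = Form.mooreSentence () 0 := rfl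

section SelfRefutation

variable {A S : Type} (M : Model A S) (a : A) (n : ℕ) (s : S)

theorem sat_imp_of_sat {φ ψ : Form A} (h : Sat M ψ s) : Sat M (φ.imp ψ) s :=
  fun hφψ => hφψ.2 h

theorem sat_ann_mooreSentence_box :
    Sat M (.ann (Form.mooreSentence a n) (.box a (.atom n))) s :=
  fun _ ⟨_, hp, _⟩ => hp

theorem sat_ann_mooreSentence_neg :
    Sat M (.ann (Form.mooreSentence a n) (.neg (Form.mooreSentence a n))) s :=
  fun ⟨_, hnb⟩ => hnb (sat_ann_mooreSentence_box M a n s)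

end SelfRefutation

section Witness

variable {A : Type}

def mooreModel : Model A Bool := ⟨fun _ _ t => t = false, fun _ s => s = true⟩

theorem isKD45_mooreModel : isKD45 (mooreModel : Model A Bool) :=
  fun _ => ⟨fun _ _ _ _ h => h, fun _ _ _ _ h => h, fun _ => ⟨false, rfl⟩⟩

theorem sat_mooreModel_mooreSentence (a : A) (n : ℕ) :
    Sat mooreModel (Form.mooreSentence a n) true :=
  ⟨rfl, fun h => Bool.false_ne_true (h false rfl)⟩

end Witness

/-- The Moore sentence p ∧ ¬□p is a non-trivial self-refuting (10-valid) formula: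
(p ∧ ¬□p) → [p ∧ ¬□p]¬(p ∧ ¬□p) is valid on K, and
(p ∧ ¬□p) ∧ [p ∧ ¬□p]¬(p ∧ ¬□p) is satisfiable on KD45. -/
theorem moore_nontrivially_self_refuting :
    (∀ (S : Type) (M : Model Unit S) (s : S),
      Sat M (Form.imp moore (Form.ann moore (Form.neg moore))) s) ∧
    (∃ (S : Type) (M : Model Unit S) (s : S), isKD45 M ∧
      Sat M (Form.conj moore (Form.ann moore (Form.neg moore))) s) := by
  rw [moore_eq_mooreSentence]
  refine ⟨fun S M s => sat_imp_of_sat M s (sat_ann_mooreSentence_neg M () 0 s), ?_⟩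
  exact ⟨Bool, mooreModel, true, isKD45_mooreModel,
    sat_mooreModel_mooreSentence () 0, sat_ann_mooreSentence_neg _ () 0 true⟩
end

section
/- Arrow elimination and state elimination agree up to bisimulation when the announced formula is true: for every announcement-free (basic modal) formula φ and every pointed Kripke model (M,s) with M,s ⊨ φ, the pointed model (M|_φ, s) obtained by state elimination (restricting M to the set of states where φ is true) is bisimilar to the pointed model (M|φ, s) obtained by arrow elimination. -/
/-- Announcement-free (basic modal) formulas. -/
inductive NoAnn {A : Type} : Form A → Prop
  | atom (n : ℕ) : NoAnn (Form.atom n)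
  | neg {φ : Form A} : NoAnn φ → NoAnn (Form.neg φ)
  | conj {φ ψ : Form A} : NoAnn φ → NoAnn ψ → NoAnn (Form.conj φ ψ)
  | box {a : A} {φ : Form A} : NoAnn φ → NoAnn (Form.box a φ)

/-- State elimination: restrict the model to the states satisfying P. -/
def stateElim {A S : Type} (M : Model A S) (P : S → Prop) : Model A {t : S // P t} :=
  ⟨fun a u v => M.R a u.1 v.1, fun n u => M.V n u.1⟩

/-- Z is a bisimulation between M and M'. -/
def IsBisim {A S S' : Type} (M : Model A S) (M' : Model A S') (Z : S → S' → Prop) : Prop :=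
  ∀ u u', Z u u' →
    (∀ n : ℕ, M.V n u ↔ M'.V n u') ∧
    (∀ (a : A) (v : S), M.R a u v → ∃ v' : S', M'.R a u' v' ∧ Z v v') ∧
    (∀ (a : A) (v' : S'), M'.R a u' v' → ∃ v : S, M.R a u v ∧ Z v v')

/-- Pointed bisimilarity. -/
def Bisimilar {A S S' : Type} (M : Model A S) (s : S) (M' : Model A S') (s' : S') : Prop :=
  ∃ Z : S → S' → Prop, IsBisim M M' Z ∧ Z s s'

/- Both updates keep exactly the arrows of `M` that end in a `P`-state; the states only `M.restrict P`
keeps are unreachable there, so the inclusion of the surviving states is a bisimulation. -/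
theorem isBisim_stateElim_restrict {A S : Type} (M : Model A S) (P : S → Prop) :
    IsBisim (stateElim M P) (M.restrict P) (fun u t => u.1 = t) := by
  rintro u _ rfl
  refine ⟨fun _ => Iff.rfl, ?forth, ?back⟩
  case forth => exact fun _ v hv => ⟨v.1, ⟨hv, v.2⟩, rfl⟩
  case back => exact fun _ t ⟨ht, hPt⟩ => ⟨⟨t, hPt⟩, ht, rfl⟩

theorem bisimilar_stateElim_restrict {A S : Type} (M : Model A S) (P : S → Prop) (s : S)
    (hs : P s) : Bisimilar (stateElim M P) ⟨s, hs⟩ (M.restrict P) s :=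
  ⟨_, isBisim_stateElim_restrict M P, rfl⟩

theorem stateElim_bisimilar_arrowElim_general (A S : Type) (φ : Form A)
    (M : Model A S) (s : S) (hs : Sat M φ s) :
    Bisimilar (stateElim M (fun t => Sat M φ t)) ⟨s, hs⟩
      (M.restrict (fun t => Sat M φ t)) s :=
  bisimilar_stateElim_restrict M _ s hs

/-- When the announced formula φ is true at s, the state-elimination update and
the arrow-elimination update yield bisimilar pointed models. -/
theorem stateElim_bisimilar_arrowElim (A S : Type) (φ : Form A) (hφ : NoAnn φ)
    (M : Model A S) (s : S) (hs : Sat M φ s) :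
    Bisimilar (stateElim M (fun t => Sat M φ t)) ⟨s, hs⟩
      (M.restrict (fun t => Sat M φ t)) s :=
  stateElim_bisimilar_arrowElim_general A S φ M s hs
end

section
/- A formula is successful in believed announcement logic if and only if it is successful in truthful announcement logic: for every announcement-free (basic modal) formula φ and every pointed Kripke model (M,s), M,s satisfies φ → [φ]φ under the believed-announcement (arrow-elimination) semantics if and only if M,s satisfies [φ]φ under the truthful-announcement (state-elimination) semantics. Consequently, for any class X of Kripke models, φ → [φ]φ is valid on X under arrow-elimination semantics iff [φ]φ is valid on X under state-elimination semantics. -/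
/-- Truthful-announcement (state-elimination) semantics:
M,s ⊨ [φ]ψ iff M,s ⊨ φ implies M|_φ, s ⊨ ψ. -/
def SatT {A : Type} : (S : Type) → Model A S → Form A → S → Prop
  | _, M, .atom n, s => M.V n s
  | S, M, .neg φ, s => ¬ SatT S M φ s
  | S, M, .conj φ ψ, s => SatT S M φ s ∧ SatT S M ψ s
  | S, M, .box a φ, s => ∀ t : S, M.R a s t → SatT S M φ t
  | S, M, .ann φ ψ, s =>
      ∀ h : SatT S M φ s,
        SatT {t : S // SatT S M φ t} (stateElim M (fun t => SatT S M φ t)) ψ ⟨s, h⟩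

/-!
Both semantics read announcement-free formulas the same way, and at a state where the
announcement `P` holds, the arrow-restricted model `M.restrict P` and the submodel
`stateElim M P` also agree on announcement-free formulas: in either model a box ranges over
exactly the `P`-successors, and these are states of the submodel. Hence `φ → [φ]φ` under
arrow elimination says the same as `[φ]φ` under state elimination.
-/

section

variable {A S : Type}

theorem satT_eq_sat_of_noAnn (M : Model A S) {ψ : Form A} (hψ : NoAnn ψ) :
    SatT S M ψ = Sat M ψ := by
  induction hψ with
  | atom n => rfl
  | neg _ ih => funext s; exact congrArg Not (congrFun ih s)
  | conj _ _ ih₁ ih₂ => funext s; exact congrArg₂ And (congrFun ih₁ s) (congrFun ih₂ s)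
  | box _ ih => funext s; exact forall_congr fun t => by rw [ih]

theorem sat_restrict_iff_satT_stateElim (M : Model A S) {ψ : Form A} (hψ : NoAnn ψ)
    (P : S → Prop) (t : S) (ht : P t) :
    Sat (M.restrict P) ψ t ↔ SatT {u : S // P u} (stateElim M P) ψ ⟨t, ht⟩ := by
  induction hψ generalizing t with
  | atom n => rfl
  | neg _ ih => exact not_congr (ih t ht)
  | conj _ _ ih₁ ih₂ => exact and_congr (ih₁ t ht) (ih₂ t ht)
  | box _ ih =>
    constructor
    · intro H u hu
      exact (ih u u.2).mp (H u ⟨hu, u.2⟩)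
    · intro H u hu
      exact (ih u hu.2).mpr (H ⟨u, hu.2⟩ hu.1)

theorem sat_imp_ann_self_iff_satT_ann_self (M : Model A S) {φ : Form A} (hφ : NoAnn φ)
    (s : S) : Sat M (Form.imp φ (Form.ann φ φ)) s ↔ SatT S M (Form.ann φ φ) s := by
  show ¬(Sat M φ s ∧ ¬Sat (M.restrict (Sat M φ)) φ s) ↔
    ∀ h : SatT S M φ s, SatT _ (stateElim M (SatT S M φ)) φ ⟨s, h⟩
  rw [satT_eq_sat_of_noAnn M hφ, not_and_not_right]
  exact forall_congr' fun hs => sat_restrict_iff_satT_stateElim M hφ _ s hs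

end

/-- A formula is successful in believed announcement logic iff it is successful in
truthful announcement logic: pointwise, M,s ⊨ φ → [φ]φ (arrow elimination) iff
M,s ⊨ [φ]φ (state elimination); consequently, for any class X of Kripke models,
φ → [φ]φ is valid on X under arrow elimination iff [φ]φ is valid on X under
state elimination. -/
theorem successful_believed_iff_successful_truthful (A : Type) (φ : Form A)
    (hφ : NoAnn φ) :
    (∀ (S : Type) (M : Model A S) (s : S),
      Sat M (Form.imp φ (Form.ann φ φ)) s ↔ SatT S M (Form.ann φ φ) s) ∧
    (∀ X : (S : Type) → Model A S → Prop,
      (∀ (S : Type) (M : Model A S) (s : S), X S M →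
        Sat M (Form.imp φ (Form.ann φ φ)) s) ↔
      (∀ (S : Type) (M : Model A S) (s : S), X S M →
        SatT S M (Form.ann φ φ) s)) := by
  have pointwise := fun S (M : Model A S) => sat_imp_ann_self_iff_satT_ann_self M hφ
  exact ⟨pointwise, fun X =>
    forall₃_congr fun S M s => imp_congr_right fun _ => pointwise S M s⟩
end
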